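/- Let k ≥ 7 be an integer and let G be a finite simple graph with Δ(G) ≤ k. Suppose G contains a vertex u of degree 4 whose four neighbors u₁, u₂, w, v satisfy deg(u₁) = deg(u₂) = 3, deg(w) ≤ Δ(G) − 1 and deg(v) ≤ Δ(G). If G − u admits an incidence (k+3, 3)-coloring, then G admits an incidence (k+3, 3)-coloring. -/

import Mathlib

open SimpleGraph

/-- An incidence coloring of `G` with `n` colors, where `φ v u` is the color of the
incidence `(v, vu)` (meaningful when `G.Adj v u`): two distinct adjacent incidences
`(v, vu)` and `(w, wx)` receive distinct colors. Incidences `(v, e)` and `(w, f)` are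
adjacent if `v = w`, or `e = f`, or the edge `vw` equals `e` or `f`. -/
def IsIncidenceColoring {V : Type*} (G : SimpleGraph V) {n : ℕ} (φ : V → V → Fin n) : Prop :=
  ∀ ⦃v u w x : V⦄, G.Adj v u → G.Adj w x → (v, u) ≠ (w, x) →
    (v = w ∨ s(v, u) = s(w, x) ∨ s(v, w) = s(v, u) ∨ s(v, w) = s(w, x)) →
    φ v u ≠ φ w x

/-- `G` admits an incidence `(n, ℓ)`-coloring: an incidence coloring with `n` colors such
that for every vertex `v`, at most `ℓ` distinct colors appear on the incidences of the
form `(u, uv)` where `u` ranges over the neighbors of `v`. -/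
def HasIncidenceColoring {V : Type*} (G : SimpleGraph V) (n ℓ : ℕ) : Prop :=
  ∃ φ : V → V → Fin n, IsIncidenceColoring G φ ∧
    ∀ v : V, ({c : Fin n | ∃ u : V, G.Adj u v ∧ φ u v = c}).ncard ≤ ℓ

/-- The incidence chromatic number: the least `n` such that `G` admits an incidence
`n`-coloring. -/
noncomputable def incChromaticNumber {V : Type*} (G : SimpleGraph V) : ℕ :=
  sInf {n : ℕ | ∃ φ : V → V → Fin n, IsIncidenceColoring G φ}

/-- `mad(G) < q`: every nonempty subgraph `H` of `G` satisfies `2|E(H)| < q·|V(H)|`. -/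
def MadLT {V : Type*} (G : SimpleGraph V) (q : ℝ) : Prop :=
  ∀ H : G.Subgraph, H.verts.Nonempty →
    (2 * H.edgeSet.ncard : ℝ) < q * H.verts.ncard

/-!
Keep a coloring of `G − u`, read as a coloring of `G` with the edges at `u` deleted, and color the
eight incidences at `u`. The incidences `(u₁, u₁u)` and `(u₂, u₂u)` are not adjacent, so they can
share a color; with the colors of `(w, wu)` and `(v, vu)` only three colors enter `u`. A color of
`(x, xu)` must avoid the colors leaving and entering `x`; a color of `(u, ux)` must avoid those
leaving `x`, and it may be a new color entering `x` only if `x` sees at most two; otherwise it is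
taken among the three already there, which are disjoint from those leaving `x`. With `k + 3` colors the
degree bounds always leave a choice; the only tight count is the one for `(v, vu)`, whose color is
therefore fixed before those of `(u, uw)` and `(u, uv)`.
-/

theorem isIncidenceColoring_iff {V : Type*} {G : SimpleGraph V} {n : ℕ} {φ : V → V → Fin n} :
    IsIncidenceColoring G φ ↔ ∀ ⦃v y w x : V⦄, G.Adj v y → G.Adj w x → (v, y) ≠ (w, x) →
      (v = w ∨ y = w ∨ v = x) → φ v y ≠ φ w x := by
  have key : ∀ v y w x : V, (v = w ∨ s(v, y) = s(w, x) ∨ s(v, w) = s(v, y) ∨ s(v, w) = s(w, x))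
      ↔ (v = w ∨ y = w ∨ v = x) := by
    intro v y w x
    simp only [Sym2.eq_iff]
    grind
  simp only [IsIncidenceColoring, key]

namespace SimpleGraph

variable {V : Type*} {n ℓ : ℕ}

def inColors (G : SimpleGraph V) (φ : V → V → Fin n) (x : V) : Set (Fin n) :=
  {c | ∃ y, G.Adj y x ∧ φ y x = c}

def outColors (G : SimpleGraph V) (φ : V → V → Fin n) (x : V) : Set (Fin n) :=
  {c | ∃ y, G.Adj x y ∧ φ x y = c}

theorem _root_.IsIncidenceColoring.disjoint_outColors_inColors {G : SimpleGraph V}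
    {φ : V → V → Fin n} (hφ : IsIncidenceColoring G φ) (x : V) :
    Disjoint (G.outColors φ x) (G.inColors φ x) := by
  rw [isIncidenceColoring_iff] at hφ
  rintro _ hO hI c hc
  obtain ⟨y, hxy, rfl⟩ := hO hc
  obtain ⟨z, hzx, hz⟩ := hI hc
  exact hφ hxy hzx (by simp [hxy.ne']) (.inr (.inr rfl)) hz.symm

theorem ncard_outColors_le [Finite V] (G : SimpleGraph V) (φ : V → V → Fin n) (x : V) :
    (G.outColors φ x).ncard ≤ (G.neighborSet x).ncard := by
  have : G.outColors φ x = φ x '' G.neighborSet x := by ext; simp [outColors]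
  exact this ▸ Set.ncard_image_le

theorem ncard_inColors_le [Finite V] (G : SimpleGraph V) (φ : V → V → Fin n) (x : V) :
    (G.inColors φ x).ncard ≤ (G.neighborSet x).ncard := by
  have : G.inColors φ x = (φ · x) '' G.neighborSet x := by ext; simp [inColors, adj_comm]
  exact this ▸ Set.ncard_image_le

section Degree

variable [Fintype V] {G : SimpleGraph V} [DecidableRel G.Adj]

theorem ncard_neighborSet_eq_degree (x : V) : (G.neighborSet x).ncard = G.degree x := by
  rw [← Nat.card_coe_set_eq, Nat.card_eq_fintype_card, card_neighborSet_eq_degree]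

theorem neighborSet_eq_of_subset_of_degree_le {u : V} {s : Set V} (hs : s ⊆ G.neighborSet u)
    (h : G.degree u ≤ s.ncard) : G.neighborSet u = s :=
  (Set.eq_of_subset_of_ncard_le hs (by rwa [ncard_neighborSet_eq_degree])).symm

theorem ncard_neighborSet_deleteIncidenceSet_lt {u x : V} (hx : G.Adj u x) :
    ((G.deleteIncidenceSet u).neighborSet x).ncard < G.degree x := by
  have : (G.deleteIncidenceSet u).neighborSet x = G.neighborSet x \ {u} := by
    ext y; simp [deleteIncidenceSet_adj, hx.ne']
  rw [this, Set.ncard_sdiff_singleton_of_mem ((G.mem_neighborSet x u).2 hx.symm),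
    ncard_neighborSet_eq_degree]
  exact Nat.sub_lt (G.degree_pos_iff_exists_adj x |>.2 ⟨u, hx.symm⟩) one_pos

end Degree

theorem _root_.HasIncidenceColoring.exists_deleteIncidenceSet [NeZero n] {G : SimpleGraph V}
    {u : V} (h : HasIncidenceColoring (G.induce {u}ᶜ) n ℓ) :
    ∃ φ : V → V → Fin n, IsIncidenceColoring (G.deleteIncidenceSet u) φ ∧
      ∀ x, ((G.deleteIncidenceSet u).inColors φ x).ncard ≤ ℓ := by
  classical
  obtain ⟨φ, hφ, hφℓ⟩ := h
  let ψ : V → V → Fin n := fun x y => if h : x ≠ u ∧ y ≠ u then φ ⟨x, h.1⟩ ⟨y, h.2⟩ else 0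
  have hψ : ∀ {x y} (hx : x ≠ u) (hy : y ≠ u), ψ x y = φ ⟨x, hx⟩ ⟨y, hy⟩ := fun hx hy =>
    dif_pos ⟨hx, hy⟩
  refine ⟨ψ, ?_, fun x => ?_⟩
  · rw [isIncidenceColoring_iff] at hφ ⊢
    intro v y w x hvy hwx hne hcond
    rw [deleteIncidenceSet_adj] at hvy hwx
    rw [hψ hvy.2.1 hvy.2.2, hψ hwx.2.1 hwx.2.2]
    refine hφ hvy.1 hwx.1 ?_ (by simpa [Subtype.ext_iff] using hcond)
    simpa [Subtype.ext_iff] using hne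
  · by_cases hx : x = u
    · simp [inColors, hx, deleteIncidenceSet_adj]
    refine le_trans (Set.ncard_le_ncard ?_) (hφℓ ⟨x, hx⟩)
    rintro _ ⟨y, hyx, rfl⟩
    rw [deleteIncidenceSet_adj] at hyx
    exact ⟨⟨y, hyx.2.1⟩, hyx.1, (hψ hyx.2.1 hx).symm⟩

section Extension

variable [DecidableEq V]

def extendAt (φ : V → V → Fin n) (u : V) (out inn : V → Fin n) : V → V → Fin n :=
  fun x y => if x = u then out y else if y = u then inn x else φ x y

variable {G : SimpleGraph V} {φ : V → V → Fin n} {u : V} {out inn : V → Fin n}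

theorem _root_.IsIncidenceColoring.extendAt (hφ : IsIncidenceColoring (G.deleteIncidenceSet u) φ)
    (hout_inj : Set.InjOn out (G.neighborSet u))
    (hout_inn : Disjoint (out '' G.neighborSet u) (inn '' G.neighborSet u))
    (hout : ∀ x ∈ G.neighborSet u, out x ∉ (G.deleteIncidenceSet u).outColors φ x)
    (hinn : ∀ x ∈ G.neighborSet u,
      inn x ∉ (G.deleteIncidenceSet u).outColors φ x ∪ (G.deleteIncidenceSet u).inColors φ x) :
    IsIncidenceColoring G (extendAt φ u out inn) := by
  rw [isIncidenceColoring_iff] at hφ ⊢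
  have hH : ∀ {x y}, G.Adj x y → x ≠ u → y ≠ u → (G.deleteIncidenceSet u).Adj x y :=
    fun h hx hy => deleteIncidenceSet_adj.2 ⟨h, hx, hy⟩
  have hsep : ∀ {x y}, G.Adj u x → G.Adj u y → out x ≠ inn y := fun {x y} hx hy h =>
    Set.disjoint_left.1 hout_inn ⟨x, hx, rfl⟩ ⟨y, hy, h.symm⟩
  have hout_old : ∀ {y x}, G.Adj u y → G.Adj y x → x ≠ u → out y ≠ φ y x :=
    fun {y x} huy hyx hx h => hout y huy ⟨x, hH hyx huy.ne' hx, h.symm⟩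
  have hinn_out : ∀ {v x}, G.Adj u v → G.Adj v x → x ≠ u → inn v ≠ φ v x :=
    fun {v x} huv hvx hx h => hinn v huv (.inl ⟨x, hH hvx huv.ne' hx, h.symm⟩)
  have hinn_in : ∀ {v w}, G.Adj u v → G.Adj w v → w ≠ u → inn v ≠ φ w v :=
    fun {v w} huv hwv hw h => hinn v huv (.inr ⟨w, hH hwv hw huv.ne', h.symm⟩)
  intro v y w x hvy hwx hne hcond
  -- each incidence leaves `u`, enters `u` or avoids `u`: split on the kinds of both
  unfold SimpleGraph.extendAt
  split_ifs with hv hw hx hy hw hx hw hx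
  · exact hout_inj.ne (hv ▸ hvy) (hw ▸ hwx) fun h => hne (by rw [hv, hw, h])
  · exact hsep (hv ▸ hvy) (hx ▸ hwx.symm)
  · obtain rfl : y = w := by grind
    exact hout_old (hv ▸ hvy) hwx hx
  · exact (hsep (hw ▸ hwx) (hy ▸ hvy.symm)).symm
  · exact absurd (by grind) hne
  · obtain rfl | rfl : v = w ∨ v = x := by grind
    · exact hinn_out (hy ▸ hvy.symm) hwx hx
    · exact hinn_in (hy ▸ hvy.symm) hwx hw
  · obtain rfl : v = x := by grind
    exact (hout_old (hw ▸ hwx) hvy hy).symm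
  · obtain rfl | rfl : w = v ∨ w = y := by grind
    · exact (hinn_out (hx ▸ hwx.symm) hvy hy).symm
    · exact (hinn_in (hx ▸ hwx.symm) hvy hv).symm
  · exact hφ (hH hvy hv hy) (hH hwx hw hx) hne hcond

theorem hasIncidenceColoring_extendAt (hφ : IsIncidenceColoring (G.deleteIncidenceSet u) φ)
    (hφℓ : ∀ x, ((G.deleteIncidenceSet u).inColors φ x).ncard ≤ ℓ)
    (hout_inj : Set.InjOn out (G.neighborSet u))
    (hout_inn : Disjoint (out '' G.neighborSet u) (inn '' G.neighborSet u))
    (hout : ∀ x ∈ G.neighborSet u, out x ∉ (G.deleteIncidenceSet u).outColors φ x)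
    (hinn : ∀ x ∈ G.neighborSet u,
      inn x ∉ (G.deleteIncidenceSet u).outColors φ x ∪ (G.deleteIncidenceSet u).inColors φ x)
    (hinnℓ : (inn '' G.neighborSet u).ncard ≤ ℓ)
    (houtℓ : ∀ x ∈ G.neighborSet u,
      (insert (out x) ((G.deleteIncidenceSet u).inColors φ x)).ncard ≤ ℓ) :
    HasIncidenceColoring G n ℓ := by
  refine ⟨_, hφ.extendAt hout_inj hout_inn hout hinn, fun x => ?_⟩
  by_cases hxu : x = u
  · refine le_trans (Set.ncard_le_ncard ?_) hinnℓ
    rintro _ ⟨y, hyx, rfl⟩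
    subst hxu
    exact ⟨y, hyx.symm, by simp [extendAt, hyx.ne]⟩
  have hold : ∀ y, G.Adj y x → y ≠ u →
      extendAt φ u out inn y x ∈ (G.deleteIncidenceSet u).inColors φ x :=
    fun y hyx hyu => ⟨y, deleteIncidenceSet_adj.2 ⟨hyx, hyu, hxu⟩, by simp [extendAt, hyu, hxu]⟩
  by_cases hux : G.Adj u x
  · refine le_trans (Set.ncard_le_ncard ?_) (houtℓ x hux)
    rintro _ ⟨y, hyx, rfl⟩
    by_cases hyu : y = u
    · simp [extendAt, hyu]
    · exact .inr (hold y hyx hyu)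
  · refine le_trans (Set.ncard_le_ncard ?_) (hφℓ x)
    rintro _ ⟨y, hyx, rfl⟩
    exact hold y hyx (by rintro rfl; exact hux hyx)

end Extension

end SimpleGraph

namespace Fin

variable {n ℓ : ℕ}

theorem exists_notMem_of_ncard_lt {S : Set (Fin n)} (h : S.ncard < n) : ∃ c, c ∉ S := by
  obtain ⟨c, -, hc⟩ :=
    Set.exists_mem_notMem_of_ncard_lt_ncard (s := S) (t := .univ) (by simpa using h)
  exact ⟨c, hc⟩

theorem exists_notMem_insert_ncard_le {O I F : Set (Fin n)} (hOI : Disjoint O I)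
    (hI : I.ncard ≤ ℓ) (hFI : (F ∩ I).ncard < ℓ) (hOF : O.ncard + F.ncard < n) :
    ∃ p, p ∉ O ∧ p ∉ F ∧ (insert p I).ncard ≤ ℓ := by
  obtain hI | rfl := hI.lt_or_eq
  · obtain ⟨p, hp⟩ := exists_notMem_of_ncard_lt ((Set.ncard_union_le O F).trans_lt hOF)
    rw [Set.mem_union, not_or] at hp
    exact ⟨p, hp.1, hp.2, (Set.ncard_insert_le p I).trans hI⟩
  · obtain ⟨p, hpI, hpF⟩ := Set.exists_mem_notMem_of_ncard_lt_ncard hFI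
    exact ⟨p, hOI.notMem_of_mem_right hpI, fun h => hpF ⟨h, hpI⟩,
      (Set.ncard_insert_of_mem hpI).le⟩

end Fin

/-- `Oᵢ` and `Iᵢ` stand for the out- and in-colors at the neighbors `u₁, u₂, w, v` of `u`;
`a` colors both `(u₁, u₁u)` and `(u₂, u₂u)`, `b` and `c` color `(w, wu)` and `(v, vu)`, and `pᵢ`
colors the incidence from `u` to the `i`-th neighbor. -/
theorem exists_colors_four_neighbors {k : ℕ} (hk : 6 ≤ k)
    {O₁ I₁ O₂ I₂ O₃ I₃ O₄ I₄ : Set (Fin (k + 3))}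
    (hO₁ : O₁.ncard ≤ 2) (hI₁ : I₁.ncard ≤ 2) (hO₂ : O₂.ncard ≤ 2) (hI₂ : I₂.ncard ≤ 2)
    (hO₃ : O₃.ncard + 2 ≤ k) (hI₃ : I₃.ncard ≤ 3) (hO₄ : O₄.ncard + 1 ≤ k) (hI₄ : I₄.ncard ≤ 3)
    (h₁ : Disjoint O₁ I₁) (h₂ : Disjoint O₂ I₂) (h₃ : Disjoint O₃ I₃) (h₄ : Disjoint O₄ I₄) :
    ∃ a b c p₁ p₂ p₃ p₄ : Fin (k + 3),
      a ∉ O₁ ∪ I₁ ∧ a ∉ O₂ ∪ I₂ ∧ b ∉ O₃ ∪ I₃ ∧ c ∉ O₄ ∪ I₄ ∧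
      p₁ ∉ O₁ ∧ p₂ ∉ O₂ ∧ p₃ ∉ O₃ ∧ p₄ ∉ O₄ ∧
      (insert p₁ I₁).ncard ≤ 3 ∧ (insert p₂ I₂).ncard ≤ 3 ∧
      (insert p₃ I₃).ncard ≤ 3 ∧ (insert p₄ I₄).ncard ≤ 3 ∧
      [p₁, p₂, p₃, p₄].Nodup ∧ Disjoint ({p₁, p₂, p₃, p₄} : Set (Fin (k + 3))) {a, b, c} := by
  obtain ⟨a, ha⟩ := Fin.exists_notMem_of_ncard_lt (S := O₁ ∪ I₁ ∪ (O₂ ∪ I₂)) (by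
    grw [Set.ncard_union_le, Set.ncard_union_le, Set.ncard_union_le]; omega)
  obtain ⟨c, hc⟩ := Fin.exists_notMem_of_ncard_lt (S := O₄ ∪ I₄) (by
    grw [Set.ncard_union_le]; omega)
  obtain ⟨p₃, hp₃O, hp₃F, hp₃I⟩ := Fin.exists_notMem_insert_ncard_le (F := {a, c}) h₃ hI₃
    (by grw [Set.ncard_inter_le_ncard_left, Set.ncard_insert_le, Set.ncard_singleton]; omega)
    (by grw [Set.ncard_insert_le, Set.ncard_singleton]; omega)
  -- as `c ∉ I₄`, at most two colors of `I₄` are forbidden for `p₄`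
  obtain ⟨p₄, hp₄O, hp₄F, hp₄I⟩ := Fin.exists_notMem_insert_ncard_le (F := {a, p₃, c}) h₄ hI₄
    (by
      have : {a, p₃, c} ∩ I₄ ⊆ {a, p₃} := by
        rintro x ⟨hx | hx | rfl, hxI⟩ <;> simp_all
      grw [Set.ncard_le_ncard this, Set.ncard_insert_le, Set.ncard_singleton]; omega)
    (by grw [Set.ncard_insert_le, Set.ncard_insert_le, Set.ncard_singleton]; omega)
  obtain ⟨b, hb⟩ := Fin.exists_notMem_of_ncard_lt (S := O₃ ∪ insert p₃ I₃ ∪ {p₄}) (by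
    grw [Set.ncard_union_le, Set.ncard_union_le, Set.ncard_singleton]; omega)
  obtain ⟨p₁, hp₁O, hp₁F, hp₁I⟩ :=
    Fin.exists_notMem_insert_ncard_le (ℓ := 3) (F := {a, b, c, p₃, p₄}) h₁
    (by omega) (by grw [Set.ncard_inter_le_ncard_right]; omega)
    (by grw [Set.ncard_insert_le, Set.ncard_insert_le, Set.ncard_insert_le, Set.ncard_insert_le,
      Set.ncard_singleton]; omega)
  obtain ⟨p₂, hp₂O, hp₂F, hp₂I⟩ :=
    Fin.exists_notMem_insert_ncard_le (ℓ := 3) (F := {a, b, c, p₃, p₄, p₁}) h₂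
    (by omega) (by grw [Set.ncard_inter_le_ncard_right]; omega)
    (by grw [Set.ncard_insert_le, Set.ncard_insert_le, Set.ncard_insert_le, Set.ncard_insert_le,
      Set.ncard_insert_le, Set.ncard_singleton]; omega)
  refine ⟨a, b, c, p₁, p₂, p₃, p₄, ?_⟩
  simp only [Set.mem_union, Set.mem_insert_iff, Set.mem_singleton_iff, not_or, Set.disjoint_left,
    forall_eq_or_imp, forall_eq, List.nodup_cons, List.mem_cons, List.not_mem_nil,
    List.nodup_nil] at *
  grind

theorem incidence_extend_four_vertex_two_threes_general {V : Type*} [Fintype V] (G : SimpleGraph V)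
    [DecidableRel G.Adj] (k : ℕ) (hk : 7 ≤ k) (hΔ : G.maxDegree ≤ k)
    (u u₁ u₂ w v : V) (h1 : G.Adj u u₁) (h2 : G.Adj u u₂) (hw : G.Adj u w) (hv : G.Adj u v)
    (h12 : u₁ ≠ u₂) (h1w : u₁ ≠ w) (h1v : u₁ ≠ v) (h2w : u₂ ≠ w) (h2v : u₂ ≠ v) (hwv : w ≠ v)
    (hdu : G.degree u = 4)
    (hd1 : G.degree u₁ = 3) (hd2 : G.degree u₂ = 3)
    (hdw : G.degree w ≤ G.maxDegree - 1)
    (hcol : HasIncidenceColoring (G.induce ({u}ᶜ : Set V)) (k + 3) 3) :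
    HasIncidenceColoring G (k + 3) 3 := by
  classical
  obtain ⟨φ, hφ, hφℓ⟩ := hcol.exists_deleteIncidenceSet
  have hN : G.neighborSet u = {u₁, u₂, w, v} := neighborSet_eq_of_subset_of_degree_le
    (by simp [Set.insert_subset_iff, h1, h2, hw, hv])
    (by rw [hdu, Set.ncard_insert_of_notMem (by simp [h12, h1w, h1v]),
      Set.ncard_insert_of_notMem (by simp [h2w, h2v]), Set.ncard_pair hwv])
  have hO x (hx : G.Adj u x) : ((G.deleteIncidenceSet u).outColors φ x).ncard < G.degree x :=
    (ncard_outColors_le _ φ x).trans_lt (ncard_neighborSet_deleteIncidenceSet_lt hx)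
  have hI x (hx : G.Adj u x) : ((G.deleteIncidenceSet u).inColors φ x).ncard < G.degree x :=
    (ncard_inColors_le _ φ x).trans_lt (ncard_neighborSet_deleteIncidenceSet_lt hx)
  have hdw_lt : G.degree w < k := by
    have := G.degree_pos_iff_exists_adj w |>.2 ⟨u, hw.symm⟩
    omega
  have hdv : G.degree v ≤ k := (G.degree_le_maxDegree v).trans hΔ
  obtain ⟨a, b, c, p₁, p₂, p₃, p₄, ha₁, ha₂, hb, hc, hp₁, hp₂, hp₃, hp₄, hp₁ℓ, hp₂ℓ, hp₃ℓ, hp₄ℓ,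
      hp, hpabc⟩ := exists_colors_four_neighbors (by omega)
    (by grind [hO u₁ h1]) (by grind [hI u₁ h1]) (by grind [hO u₂ h2]) (by grind [hI u₂ h2])
    (by grind [hO w hw]) (hφℓ w) (by grind [hO v hv]) (hφℓ v)
    (hφ.disjoint_outColors_inColors u₁) (hφ.disjoint_outColors_inColors u₂)
    (hφ.disjoint_outColors_inColors w) (hφ.disjoint_outColors_inColors v)
  simp only [Set.mem_union, not_or] at ha₁ ha₂ hb hc
  simp only [List.nodup_cons, List.mem_cons, List.not_mem_nil, or_false, not_or] at hp
  refine hasIncidenceColoring_extendAt hφ hφℓ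
    (out := fun x => if x = u₁ then p₁ else if x = u₂ then p₂ else if x = w then p₃ else p₄)
    (inn := fun x => if x = w then b else if x = v then c else a) ?_ ?_ ?_ ?_ ?_ ?_ <;>
  simp [Set.image_insert_eq, h12.symm, h1w.symm, h1v.symm, h2w.symm, h2v.symm, hwv.symm,
    Set.injOn_insert, *]
  grw [Set.ncard_insert_le, Set.ncard_insert_le, Set.ncard_singleton]

theorem incidence_extend_four_vertex_two_threes {V : Type*} [Fintype V] (G : SimpleGraph V)
    [DecidableRel G.Adj] (k : ℕ) (hk : 7 ≤ k) (hΔ : G.maxDegree ≤ k)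
    (u u₁ u₂ w v : V) (h1 : G.Adj u u₁) (h2 : G.Adj u u₂) (hw : G.Adj u w) (hv : G.Adj u v)
    (h12 : u₁ ≠ u₂) (h1w : u₁ ≠ w) (h1v : u₁ ≠ v) (h2w : u₂ ≠ w) (h2v : u₂ ≠ v) (hwv : w ≠ v)
    (hdu : G.degree u = 4)
    (hd1 : G.degree u₁ = 3) (hd2 : G.degree u₂ = 3)
    (hdw : G.degree w ≤ G.maxDegree - 1) (hdv : G.degree v ≤ G.maxDegree)
    (hcol : HasIncidenceColoring (G.induce ({u}ᶜ : Set V)) (k + 3) 3) :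
    HasIncidenceColoring G (k + 3) 3 :=
  incidence_extend_four_vertex_two_threes_general G k hk hΔ u u₁ u₂ w v h1 h2 hw hv h12 h1w h1v h2w
    h2v hwv hdu hd1 hd2 hdw hcol
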